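/- For a continuously differentiable path γ : [0,T] → ℝ, the supremum over finite partitions of the partition energy equals the Dirichlet energy: sup_Π (1/2)∑ᵢ |γ(tᵢ)-γ(tᵢ₋₁)|²/(tᵢ-tᵢ₋₁) = (1/2)∫₀ᵀ γ'(s)² ds. -/

import Mathlib

open Finset Set MeasureTheory

/-- A finite partition `0 = t₀ < t₁ < ⋯ < t_n = T` of `[0,T]`. -/
structure TimePartition (T : ℝ) where
  n : ℕ
  npos : 0 < n
  t : ℕ → ℝ
  mono : ∀ i < n, t i < t (i + 1)
  first : t 0 = 0
  last : t n = T

/-- The energy of a path `γ` with respect to a partition: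
`E^Π(γ) = (1/2)∑ᵢ |γ(tᵢ)-γ(tᵢ₋₁)|²/(tᵢ-tᵢ₋₁)`. -/
noncomputable def partEnergy {T : ℝ} (γ : ℝ → ℝ) (P : TimePartition T) : ℝ :=
  (1 / 2) * ∑ i ∈ Finset.range P.n, (γ (P.t (i + 1)) - γ (P.t i)) ^ 2 / (P.t (i + 1) - P.t i)

/-!
On each cell `[a, b]` the slope `(γ b - γ a) / (b - a)` is the mean of `γ'`, so
`∫ₐᵇ γ'² = (γ b - γ a)² / (b - a) + ∫ₐᵇ (γ' - slope)²`, and summing over a partition shows that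
the Dirichlet energy exceeds twice the partition energy by a sum of nonnegative defects.
By the mean value theorem the slope is a value of `γ'` on the cell, so each defect is at most
`ω² (b - a)` with `ω` the oscillation of `γ'` on the cell; uniform continuity of `γ'` on `[0, T]`
makes the total defect arbitrarily small for fine uniform partitions.
-/

theorem integral_sq_eq_sq_integral_div_add {f : ℝ → ℝ} {a b : ℝ}
    (hf : IntervalIntegrable f volume a b)
    (hf2 : IntervalIntegrable (fun x => f x ^ 2) volume a b) :
    ∫ x in a..b, f x ^ 2 =
      (∫ x in a..b, f x) ^ 2 / (b - a) + ∫ x in a..b, (f x - (∫ x in a..b, f x) / (b - a)) ^ 2 := by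
  set I := ∫ x in a..b, f x
  set c := I / (b - a)
  have hexpand :
      ∫ x in a..b, (f x - c) ^ 2 = (∫ x in a..b, f x ^ 2) - 2 * c * I + (b - a) * c ^ 2 := by
    have hsq : ∀ x, (f x - c) ^ 2 = f x ^ 2 - 2 * c * f x + c ^ 2 := fun x => by ring
    simp_rw [hsq]
    rw [intervalIntegral.integral_add (hf2.sub (hf.const_mul _)) intervalIntegrable_const,
      intervalIntegral.integral_sub hf2 (hf.const_mul _), intervalIntegral.integral_const_mul,
      intervalIntegral.integral_const, smul_eq_mul]
  rw [hexpand]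
  rcases eq_or_ne a b with rfl | hab
  · simp [I, c]
  · have hba : b - a ≠ 0 := sub_ne_zero.mpr hab.symm
    simp only [c]
    field_simp
    ring

noncomputable def secantDefect (γ : ℝ → ℝ) (a b : ℝ) : ℝ :=
  ∫ s in a..b, (deriv γ s - (γ b - γ a) / (b - a)) ^ 2

section SecantDefect

variable {γ : ℝ → ℝ} {a b : ℝ}

theorem integral_deriv_sq_eq_add_secantDefect (hγ : ContDiff ℝ 1 γ) :
    ∫ s in a..b, deriv γ s ^ 2 = (γ b - γ a) ^ 2 / (b - a) + secantDefect γ a b := by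
  have hγ' : Continuous (deriv γ) := hγ.continuous_deriv le_rfl
  have hftc : ∫ s in a..b, deriv γ s = γ b - γ a :=
    intervalIntegral.integral_deriv_eq_sub (fun x _ => hγ.differentiable one_ne_zero x)
      (hγ'.intervalIntegrable a b)
  rw [integral_sq_eq_sq_integral_div_add (hγ'.intervalIntegrable a b)
    ((hγ'.pow 2).intervalIntegrable a b), hftc, secantDefect]

theorem secantDefect_nonneg (hab : a ≤ b) : 0 ≤ secantDefect γ a b :=
  intervalIntegral.integral_nonneg hab fun _ _ => sq_nonneg _

theorem secantDefect_le_of_oscillation_le (hγ : ContDiff ℝ 1 γ) (hab : a < b) {ω : ℝ}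
    (hosc : ∀ s ∈ Icc a b, ∀ s' ∈ Icc a b, |deriv γ s - deriv γ s'| ≤ ω) :
    secantDefect γ a b ≤ ω ^ 2 * (b - a) := by
  have hd : Differentiable ℝ γ := hγ.differentiable one_ne_zero
  obtain ⟨ξ, hξ, hslope⟩ := exists_deriv_eq_slope γ hab hd.continuous.continuousOn
    fun x _ => (hd x).differentiableWithinAt
  have hbound : ∀ s ∈ Icc a b, (deriv γ s - deriv γ ξ) ^ 2 ≤ ω ^ 2 := fun s hs => by
    obtain ⟨hlo, hhi⟩ := abs_le.mp (hosc s hs ξ (Ioo_subset_Icc_self hξ))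
    exact sq_le_sq' hlo hhi
  calc secantDefect γ a b = ∫ s in a..b, (deriv γ s - deriv γ ξ) ^ 2 := by
        rw [secantDefect, hslope]
    _ ≤ ∫ _ in a..b, ω ^ 2 :=
      intervalIntegral.integral_mono_on hab.le
        (((hγ.continuous_deriv le_rfl).sub continuous_const).pow 2 |>.intervalIntegrable a b)
        intervalIntegrable_const hbound
    _ = ω ^ 2 * (b - a) := by rw [intervalIntegral.integral_const, smul_eq_mul, mul_comm]

end SecantDefect

namespace TimePartition

variable {T : ℝ}

theorem sum_integral (P : TimePartition T) {f : ℝ → ℝ} (hf : Continuous f) :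
    ∑ i ∈ range P.n, ∫ s in P.t i..P.t (i + 1), f s = ∫ s in (0 : ℝ)..T, f s := by
  rw [intervalIntegral.sum_integral_adjacent_intervals fun k _ => hf.intervalIntegrable _ _,
    P.first, P.last]

theorem sum_t_succ_sub (P : TimePartition T) : ∑ i ∈ range P.n, (P.t (i + 1) - P.t i) = T := by
  rw [Finset.sum_range_sub, P.first, P.last, sub_zero]

noncomputable def uniform (hT : 0 < T) (n : ℕ) (hn : 0 < n) : TimePartition T where
  n := n
  npos := hn
  t i := i * (T / n)
  mono i _ := mul_lt_mul_of_pos_right (by exact_mod_cast i.lt_succ_self) (by positivity)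
  first := by simp
  last := by field_simp

theorem uniform_t_succ_sub (hT : 0 < T) {n : ℕ} (hn : 0 < n) (i : ℕ) :
    (uniform hT n hn).t (i + 1) - (uniform hT n hn).t i = T / n := by
  simp only [uniform]
  push_cast
  ring

theorem Icc_uniform_subset (hT : 0 < T) {n : ℕ} (hn : 0 < n) {i : ℕ} (hi : i < n) :
    Icc ((uniform hT n hn).t i) ((uniform hT n hn).t (i + 1)) ⊆ Icc 0 T := by
  have hn' : (0 : ℝ) < n := mod_cast hn
  refine Icc_subset_Icc (by simp only [uniform]; positivity) ?_
  calc (uniform hT n hn).t (i + 1) = (i + 1 : ℕ) * (T / n) := rfl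
    _ ≤ n * (T / n) := by gcongr; exact_mod_cast hi
    _ = T := by field_simp

end TimePartition

theorem integral_deriv_sq_eq_two_partEnergy_add {T : ℝ} {γ : ℝ → ℝ} (hγ : ContDiff ℝ 1 γ)
    (P : TimePartition T) :
    ∫ s in (0 : ℝ)..T, deriv γ s ^ 2 =
      2 * partEnergy γ P + ∑ i ∈ range P.n, secantDefect γ (P.t i) (P.t (i + 1)) := by
  rw [← P.sum_integral (f := fun s => deriv γ s ^ 2) ((hγ.continuous_deriv le_rfl).pow 2),
    partEnergy]
  simp_rw [integral_deriv_sq_eq_add_secantDefect hγ]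
  rw [sum_add_distrib]
  ring

theorem two_partEnergy_le {T : ℝ} {γ : ℝ → ℝ} (hγ : ContDiff ℝ 1 γ) (P : TimePartition T) :
    2 * partEnergy γ P ≤ ∫ s in (0 : ℝ)..T, deriv γ s ^ 2 := by
  rw [integral_deriv_sq_eq_two_partEnergy_add hγ P, le_add_iff_nonneg_right]
  exact sum_nonneg fun i hi => secantDefect_nonneg (P.mono i (mem_range.mp hi)).le

theorem exists_sum_secantDefect_le {T : ℝ} (hT : 0 < T) {γ : ℝ → ℝ} (hγ : ContDiff ℝ 1 γ)
    {η : ℝ} (hη : 0 < η) :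
    ∃ P : TimePartition T, ∑ i ∈ range P.n, secantDefect γ (P.t i) (P.t (i + 1)) ≤ η := by
  set ω := √(η / T)
  obtain ⟨δ, hδ, huc⟩ := Metric.uniformContinuousOn_iff_le.mp
    ((isCompact_Icc (a := 0) (b := T)).uniformContinuousOn_of_continuous
      (hγ.continuous_deriv le_rfl).continuousOn)
    ω (Real.sqrt_pos.mpr (div_pos hη hT))
  obtain ⟨n, hn⟩ := exists_nat_gt (T / δ)
  have hn0 : (0 : ℝ) < n := (div_pos hT hδ).trans hn
  have hmesh : T / n < δ := (div_lt_comm₀ hδ hn0).mp hn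
  have hn0' : 0 < n := mod_cast hn0
  set P := TimePartition.uniform hT n hn0'
  have hosc : ∀ i < n, ∀ s ∈ Icc (P.t i) (P.t (i + 1)), ∀ s' ∈ Icc (P.t i) (P.t (i + 1)),
      |deriv γ s - deriv γ s'| ≤ ω := by
    intro i hi s hs s' hs'
    have hcell := TimePartition.Icc_uniform_subset hT hn0' hi
    have hlen := TimePartition.uniform_t_succ_sub hT hn0' i
    have hdist : dist s s' ≤ δ := by
      rw [Real.dist_eq, abs_sub_le_iff]
      constructor <;> linarith [hs.1, hs.2, hs'.1, hs'.2]
    simpa only [Real.dist_eq] using huc s (hcell hs) s' (hcell hs') hdist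
  refine ⟨P, ?_⟩
  calc ∑ i ∈ range P.n, secantDefect γ (P.t i) (P.t (i + 1))
      ≤ ∑ i ∈ range P.n, ω ^ 2 * (P.t (i + 1) - P.t i) :=
        sum_le_sum fun i hi => secantDefect_le_of_oscillation_le hγ
          (P.mono i (mem_range.mp hi)) (hosc i (mem_range.mp hi))
    _ = ω ^ 2 * T := by rw [← mul_sum, P.sum_t_succ_sub]
    _ = η := by rw [Real.sq_sqrt (div_pos hη hT).le]; field_simp

/-- For a continuously differentiable path `γ : [0,T] → ℝ`, the supremum over
finite partitions of the partition energy equals the Dirichlet energy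
`(1/2)∫₀ᵀ γ'(s)² ds`. -/
theorem iSup_partEnergy_eq_dirichlet (T : ℝ) (hT : 0 < T) (γ : ℝ → ℝ)
    (hγ : ContDiff ℝ 1 γ) :
    (⨆ P : TimePartition T, ENNReal.ofReal (partEnergy γ P))
      = ENNReal.ofReal ((1 / 2) * ∫ s in (0 : ℝ)..T, (deriv γ s) ^ 2) := by
  refine le_antisymm (iSup_le fun P => ENNReal.ofReal_le_ofReal ?_) ?_
  · linarith [two_partEnergy_le hγ P]
  refine ENNReal.le_of_forall_pos_le_add fun ε hε _ => ?_
  obtain ⟨P, hP⟩ := exists_sum_secantDefect_le hT hγ (by positivity : (0 : ℝ) < 2 * ε)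
  have hdecomp := integral_deriv_sq_eq_two_partEnergy_add hγ P
  calc ENNReal.ofReal ((1 / 2) * ∫ s in (0 : ℝ)..T, (deriv γ s) ^ 2)
      ≤ ENNReal.ofReal (partEnergy γ P + ε) := ENNReal.ofReal_le_ofReal (by linarith)
    _ ≤ ENNReal.ofReal (partEnergy γ P) + ENNReal.ofReal ε := ENNReal.ofReal_add_le
    _ ≤ (⨆ P : TimePartition T, ENNReal.ofReal (partEnergy γ P)) + ε := by
      rw [ENNReal.ofReal_coe_nnreal]
      gcongr
      exact le_iSup (fun P => ENNReal.ofReal (partEnergy γ P)) P
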